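/- The generating function g(z) = Σ_{k≥0} |NC_h(2k)| z^k of the number of non-crossing partitions into even blocks satisfies the cubic equation g − 1 = z g^3 (as an identity of formal power series). -/

import Mathlib

open Finset

/-- A partition of `{1,…,m}` is non-crossing if there are no `a < b < c < d` with
`a, c` in one block and `b, d` in a different block. -/
def IsNonCrossing {m : ℕ} (P : Finpartition (Finset.univ : Finset (Fin m))) : Prop :=
  ∀ a b c d : Fin m, a < b → b < c → c < d →
    ∀ B ∈ P.parts, ∀ C ∈ P.parts, a ∈ B → c ∈ B → b ∈ C → d ∈ C → B = C

/-- `F_k = |NC_h(2k)|`, the number of non-crossing partitions of `{1,…,2k}` all of whose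
blocks have even size. -/
noncomputable def Fnum (k : ℕ) : ℕ :=
  Nat.card {P : Finpartition (Finset.univ : Finset (Fin (2 * k))) //
    IsNonCrossing P ∧ ∀ B ∈ P.parts, Even B.card}

open scoped Classical

structure GoodRel (n : ℕ) (r : ℕ → ℕ → Prop) : Prop where
  symm : ∀ {x y}, r x y → r y x
  trans : ∀ {x y z}, r x y → r y z → r x z
  refl : ∀ x, x < n → r x x
  lt : ∀ {x y}, r x y → x < n ∧ y < n
  nc : ∀ {a b c d}, a < b → b < c → c < d → r a c → r b d → r a b
  even : ∀ x, x < n → Even (((Finset.range n).filter (r x)).card)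

def NCSet (n : ℕ) : Type := {r : ℕ → ℕ → Prop // GoodRel n r}

section Corr

variable {m : ℕ}

noncomputable def toRel (P : Finpartition (Finset.univ : Finset (Fin m))) : ℕ → ℕ → Prop :=
  fun x y => ∃ (hx : x < m) (hy : y < m), P.part ⟨x, hx⟩ = P.part ⟨y, hy⟩

lemma finpart_ext {P Q : Finpartition (Finset.univ : Finset (Fin m))}
    (h : ∀ x : Fin m, P.part x = Q.part x) : P = Q := by
  ext B
  constructor
  · intro hB
    obtain ⟨x, hx⟩ := P.nonempty_of_mem_parts hB
    rw [← P.part_eq_of_mem hB hx, h]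
    exact Q.part_mem.2 (mem_univ x)
  · intro hB
    obtain ⟨x, hx⟩ := Q.nonempty_of_mem_parts hB
    rw [← Q.part_eq_of_mem hB hx, ← h]
    exact P.part_mem.2 (mem_univ x)

lemma toRel_card (P : Finpartition (Finset.univ : Finset (Fin m))) {x : ℕ} (hx : x < m) :
    ((Finset.range m).filter (toRel P x)).card = (P.part ⟨x, hx⟩).card := by
  apply Finset.card_bij (fun y hy => (⟨y, (Finset.mem_range.1 (Finset.mem_filter.1 hy).1)⟩ : Fin m))
  · intro y hy
    obtain ⟨hy1, hx', hy', hpart⟩ := Finset.mem_filter.1 hy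
    exact (P.mem_part_iff_part_eq_part (mem_univ _) (mem_univ _)).2 hpart.symm
  · intro y hy y' hy' hxy
    exact congrArg Fin.val hxy
  · intro b hb
    refine ⟨b.1, Finset.mem_filter.2 ⟨Finset.mem_range.2 b.2, hx, b.2, ?_⟩, rfl⟩
    have := (P.mem_part_iff_part_eq_part (mem_univ b) (mem_univ ⟨x, hx⟩)).1 hb
    simpa using this.symm

lemma toRel_good {P : Finpartition (Finset.univ : Finset (Fin m))}
    (h1 : IsNonCrossing P) (h2 : ∀ B ∈ P.parts, Even B.card) : GoodRel m (toRel P) where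
  symm := fun ⟨hx, hy, h⟩ => ⟨hy, hx, h.symm⟩
  trans := fun ⟨hx, hy, h⟩ ⟨_, hz, h'⟩ => ⟨hx, hz, h.trans h'⟩
  refl := fun x hx => ⟨hx, hx, rfl⟩
  lt := fun ⟨hx, hy, _⟩ => ⟨hx, hy⟩
  nc := by
    rintro a b c d hab hbc hcd ⟨ha, hc, hac⟩ ⟨hb, hd, hbd⟩
    refine ⟨ha, hb, ?_⟩
    have := h1 ⟨a, ha⟩ ⟨b, hb⟩ ⟨c, hc⟩ ⟨d, hd⟩ hab hbc hcd
      (P.part ⟨a, ha⟩) (P.part_mem.2 (mem_univ _)) (P.part ⟨b, hb⟩) (P.part_mem.2 (mem_univ _))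
      (P.mem_part (mem_univ _)) (hac ▸ P.mem_part (mem_univ _))
      (P.mem_part (mem_univ _)) (hbd ▸ P.mem_part (mem_univ _))
    exact this
  even := fun x hx => by
    rw [toRel_card P hx]
    exact h2 _ (P.part_mem.2 (mem_univ _))

noncomputable def ofRel (r : ℕ → ℕ → Prop) (hr : GoodRel m r) :
    Finpartition (Finset.univ : Finset (Fin m)) :=
  Finpartition.ofSetoid ⟨fun i j : Fin m => r i j,
    ⟨fun i => hr.refl i i.2, fun h => hr.symm h, fun h h' => hr.trans h h'⟩⟩

lemma ofRel_part {r : ℕ → ℕ → Prop} (hr : GoodRel m r) (x y : Fin m) :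
    y ∈ (ofRel r hr).part x ↔ r x y :=
  Finpartition.mem_part_ofSetoid_iff_rel

lemma ofRel_part_eq {r : ℕ → ℕ → Prop} (hr : GoodRel m r) (x y : Fin m) :
    (ofRel r hr).part x = (ofRel r hr).part y ↔ r x y := by
  constructor
  · intro h
    have : (y : Fin m) ∈ (ofRel r hr).part y := (ofRel r hr).mem_part (mem_univ _)
    rw [← h, ofRel_part] at this
    exact this
  · intro h
    have : (y : Fin m) ∈ (ofRel r hr).part x := (ofRel_part hr x y).2 h
    exact ((ofRel r hr).mem_part_iff_part_eq_part (mem_univ _) (mem_univ _)).1 this |>.symm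

lemma ofRel_good {r : ℕ → ℕ → Prop} (hr : GoodRel m r) :
    IsNonCrossing (ofRel r hr) ∧ ∀ B ∈ (ofRel r hr).parts, Even B.card := by
  constructor
  · intro a b c d hab hbc hcd B hB C hC haB hcB hbC hdC
    have hBa : B = (ofRel r hr).part a := ((ofRel r hr).part_eq_of_mem hB haB).symm
    have hCb : C = (ofRel r hr).part b := ((ofRel r hr).part_eq_of_mem hC hbC).symm
    have hac : r a c := (ofRel_part hr a c).1 (hBa ▸ hcB)
    have hbd : r b d := (ofRel_part hr b d).1 (hCb ▸ hdC)
    have hab' : r a b := hr.nc hab hbc hcd hac hbd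
    rw [hBa, hCb, ofRel_part_eq]
    exact hab'
  · intro B hB
    obtain ⟨x, hx⟩ := (ofRel r hr).nonempty_of_mem_parts hB
    have : B = (ofRel r hr).part x := ((ofRel r hr).part_eq_of_mem hB hx).symm
    subst this
    have hcard : ((Finset.range m).filter (r x)).card = ((ofRel r hr).part x).card := by
      apply Finset.card_bij
        (fun y hy => (⟨y, Finset.mem_range.1 (Finset.mem_filter.1 hy).1⟩ : Fin m))
      · intro y hy
        exact (ofRel_part hr x _).2 (Finset.mem_filter.1 hy).2
      · intro y hy y' hy' hxy
        exact congrArg Fin.val hxy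
      · intro b hb
        exact ⟨b.1, Finset.mem_filter.2 ⟨Finset.mem_range.2 b.2, (ofRel_part hr x b).1 hb⟩, rfl⟩
    rw [← hcard]
    exact hr.even x x.2

noncomputable def finpartEquiv (m : ℕ) :
    {P : Finpartition (Finset.univ : Finset (Fin m)) //
      IsNonCrossing P ∧ ∀ B ∈ P.parts, Even B.card} ≃ NCSet m where
  toFun P := ⟨toRel P.1, toRel_good P.2.1 P.2.2⟩
  invFun r := ⟨ofRel r.1 r.2, ofRel_good r.2⟩
  left_inv := by
    rintro ⟨P, hP⟩
    ext1
    apply finpart_ext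
    intro x
    ext y
    rw [ofRel_part]
    unfold toRel
    constructor
    · rintro ⟨hx, hy, h⟩
      rw [P.mem_part_iff_part_eq_part (mem_univ _) (mem_univ _)]
      exact (by simpa using h.symm)
    · intro h
      exact ⟨x.2, y.2, by
        have := (P.mem_part_iff_part_eq_part (mem_univ y) (mem_univ x)).1 h
        simpa using this.symm⟩
  right_inv := by
    rintro ⟨r, hr⟩
    apply Subtype.ext
    funext x y
    apply propext
    unfold toRel
    constructor
    · rintro ⟨hx, hy, h⟩
      exact (ofRel_part_eq hr _ _).1 h
    · intro h
      obtain ⟨hx, hy⟩ := hr.lt h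
      exact ⟨hx, hy, (ofRel_part_eq hr ⟨x, hx⟩ ⟨y, hy⟩).2 h⟩

instance : Finite (Finpartition (Finset.univ : Finset (Fin m))) :=
  Finite.of_injective (fun P => P.parts) fun _ _ h => Finpartition.ext h

instance : Finite (NCSet m) := Finite.of_equiv _ (finpartEquiv m)

lemma Fnum_eq (k : ℕ) : Fnum k = Nat.card (NCSet (2 * k)) :=
  Nat.card_congr (finpartEquiv (2 * k))

end Corr

section Struct

variable {n : ℕ} {r : ℕ → ℕ → Prop}

lemma even_union (hr : GoodRel n r) :
    ∀ t : Finset ℕ, (∀ x ∈ t, x < n) → (∀ x ∈ t, ∀ y, r x y → y ∈ t) → Even t.card := by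
  intro t
  induction t using Finset.strongInduction with
  | _ t ih =>
    intro h1 h2
    rcases t.eq_empty_or_nonempty with rfl | ⟨x, hx⟩
    · simp
    · set cls := (Finset.range n).filter (r x) with hcls
      have hsub : cls ⊆ t := fun y hy => h2 x hx y (Finset.mem_filter.1 hy).2
      have hne : cls.Nonempty := ⟨x, Finset.mem_filter.2 ⟨Finset.mem_range.2 (h1 x hx),
        hr.refl x (h1 x hx)⟩⟩
      have hssub : t \ cls ⊂ t := Finset.sdiff_ssubset hsub hne
      have heven : Even ((t \ cls).card) := by
        apply ih _ hssub (fun z hz => h1 z (Finset.mem_sdiff.1 hz).1)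
        intro z hz y hzy
        obtain ⟨hzt, hzc⟩ := Finset.mem_sdiff.1 hz
        refine Finset.mem_sdiff.2 ⟨h2 z hzt y hzy, fun hyc => hzc ?_⟩
        refine Finset.mem_filter.2 ⟨Finset.mem_range.2 (h1 z hzt), ?_⟩
        exact hr.trans (Finset.mem_filter.1 hyc).2 (hr.symm hzy)
      have hcard : (t \ cls).card + cls.card = t.card :=
        Finset.card_sdiff_add_card_eq_card hsub
      rw [← hcard]
      exact heven.add (hr.even x (h1 x hx))

noncomputable def pt (r : ℕ → ℕ → Prop) : ℕ := sInf {y | 0 < y ∧ r 0 y}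

noncomputable def qt (n : ℕ) (r : ℕ → ℕ → Prop) : ℕ :=
  sInf ({y | pt r < y ∧ r 0 y} ∪ {n})

lemma class0_nonempty (hr : GoodRel n r) (hn : 0 < n) : ∃ y, 0 < y ∧ r 0 y := by
  have h0 : (0 : ℕ) ∈ (Finset.range n).filter (r 0) :=
    Finset.mem_filter.2 ⟨Finset.mem_range.2 hn, hr.refl 0 hn⟩
  obtain ⟨c, hc⟩ := hr.even 0 hn
  have h1 : 1 < ((Finset.range n).filter (r 0)).card := by
    have : 0 < ((Finset.range n).filter (r 0)).card := Finset.card_pos.2 ⟨0, h0⟩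
    omega
  obtain ⟨y, hy, hy0⟩ := Finset.exists_mem_ne h1 0
  exact ⟨y, Nat.pos_of_ne_zero hy0, (Finset.mem_filter.1 hy).2⟩

lemma pt_spec (hr : GoodRel n r) (hn : 0 < n) : 0 < pt r ∧ r 0 (pt r) :=
  Nat.sInf_mem (class0_nonempty hr hn)

lemma pt_lt (hr : GoodRel n r) (hn : 0 < n) : pt r < n := (hr.lt (pt_spec hr hn).2).2

lemma pt_min {y : ℕ} (h1 : 0 < y) (h2 : y < pt r) : ¬ r 0 y := fun h => by
  have : pt r ≤ y := Nat.sInf_le (show y ∈ {y | 0 < y ∧ r 0 y} from ⟨h1, h⟩)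
  omega

lemma qt_le : qt n r ≤ n :=
  Nat.sInf_le (show n ∈ ({y | pt r < y ∧ r 0 y} ∪ {n} : Set ℕ) from Or.inr rfl)

lemma qt_spec (hr : GoodRel n r) (hq : qt n r < n) : pt r < qt n r ∧ r 0 (qt n r) := by
  have hmem : qt n r ∈ ({y | pt r < y ∧ r 0 y} ∪ {n} : Set ℕ) :=
    Nat.sInf_mem (⟨n, Or.inr rfl⟩ : ({y | pt r < y ∧ r 0 y} ∪ {n} : Set ℕ).Nonempty)
  rcases hmem with h | h
  · exact h
  · simp only [Set.mem_singleton_iff] at h; omega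

lemma qt_gt (hr : GoodRel n r) (hn : 0 < n) : pt r < qt n r := by
  rcases lt_or_ge (qt n r) n with h | h
  · exact (qt_spec hr h).1
  · have := pt_lt hr hn; omega

lemma qt_min {y : ℕ} (h1 : pt r < y) (h2 : y < qt n r) : ¬ r 0 y := fun h => by
  have : qt n r ≤ y :=
    Nat.sInf_le (show y ∈ ({y | pt r < y ∧ r 0 y} ∪ {n} : Set ℕ) from Or.inl ⟨h1, h⟩)
  omega

lemma mem_class0 (hr : GoodRel n r) {x : ℕ} (h : r 0 x) :
    x = 0 ∨ x = pt r ∨ qt n r ≤ x := by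
  rcases Nat.lt_trichotomy x (pt r) with h1 | h1 | h1
  · left
    by_contra h0
    exact pt_min (Nat.pos_of_ne_zero h0) h1 h
  · right; left; exact h1
  · rcases lt_or_ge x (qt n r) with h2 | h2
    · exact absurd h (qt_min h1 h2)
    · right; right; exact h2

lemma closureA (hr : GoodRel n r) (hn : 0 < n) {x y : ℕ} (h1 : 0 < x) (h2 : x < pt r)
    (hxy : r x y) : 0 < y ∧ y < pt r := by
  have hy0 : y ≠ 0 := fun h => pt_min h1 h2 (h ▸ hr.symm hxy)
  have hyp : y ≠ pt r := fun h => pt_min h1 h2 (hr.trans (pt_spec hr hn).2 (hr.symm (h ▸ hxy)))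
  rcases Nat.lt_trichotomy y (pt r) with h3 | h3 | h3
  · exact ⟨Nat.pos_of_ne_zero hy0, h3⟩
  · exact absurd h3 hyp
  · exact absurd (hr.nc h1 h2 h3 (pt_spec hr hn).2 hxy) (pt_min h1 h2)

lemma closureB (hr : GoodRel n r) (hn : 0 < n) {x y : ℕ} (h1 : pt r < x) (h2 : x < qt n r)
    (hxy : r x y) : pt r < y ∧ y < qt n r := by
  have hx0 : ¬ r 0 x := qt_min h1 h2
  have hy0 : y ≠ 0 := fun h => hx0 (h ▸ hr.symm hxy)
  have hyp : y ≠ pt r := fun h => hx0 (hr.trans (pt_spec hr hn).2 (hr.symm (h ▸ hxy)))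
  have hylow : ¬ (0 < y ∧ y < pt r) := fun ⟨hy1, hy2⟩ => by
    have := closureA hr hn hy1 hy2 (hr.symm hxy)
    omega
  rcases lt_or_ge y (qt n r) with h3 | h3
  · have : pt r < y := by
      rcases Nat.lt_trichotomy y (pt r) with h4 | h4 | h4
      · exact absurd ⟨Nat.pos_of_ne_zero hy0, h4⟩ hylow
      · exact absurd h4 hyp
      · exact h4
    exact ⟨this, h3⟩
  · exfalso
    have hyn : y < n := (hr.lt hxy).2
    have hqn : qt n r < n := by omega
    have hq0 : r 0 (qt n r) := (qt_spec hr hqn).2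
    rcases eq_or_lt_of_le h3 with h4 | h4
    · exact hx0 (hr.trans (h4 ▸ hq0) (hr.symm hxy))
    · have h0x : 0 < x := by have := (pt_spec hr hn).1; omega
      exact hx0 (hr.nc h0x h2 h4 hq0 hxy)

lemma closureC (hr : GoodRel n r) (hn : 0 < n) {x y : ℕ} (h1 : qt n r ≤ x) (h2 : ¬ r 0 x)
    (hxy : r x y) : qt n r ≤ y ∧ ¬ r 0 y := by
  have hy0 : ¬ r 0 y := fun h => h2 (hr.trans h (hr.symm hxy))
  have hygt : qt n r ≤ y := by
    have hp := pt_spec hr hn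
    by_contra h3
    push_neg at h3
    rcases Nat.lt_trichotomy y (pt r) with h4 | h4 | h4
    · rcases Nat.eq_zero_or_pos y with h5 | h5
      · exact hy0 (h5 ▸ hr.refl 0 hn)
      · have := closureA hr hn h5 h4 (hr.symm hxy)
        have hq := qt_gt hr hn
        omega
    · exact hy0 (h4 ▸ hp.2)
    · have := closureB hr hn h4 h3 (hr.symm hxy)
      omega
  exact ⟨hygt, hy0⟩

lemma even_ptm (hr : GoodRel n r) (hn : 0 < n) : Even (pt r - 1) := by
  have h1 : Even ((Finset.Ioo 0 (pt r)).card) := by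
    apply even_union hr
    · intro x hx
      have := Finset.mem_Ioo.1 hx
      have := pt_lt hr hn
      omega
    · intro x hx y hxy
      obtain ⟨h1, h2⟩ := Finset.mem_Ioo.1 hx
      have := closureA hr hn h1 h2 hxy
      exact Finset.mem_Ioo.2 this
  rwa [Nat.card_Ioo] at h1

lemma even_qtm (hr : GoodRel n r) (hn : 0 < n) : Even (qt n r - pt r - 1) := by
  have h1 : Even ((Finset.Ioo (pt r) (qt n r)).card) := by
    apply even_union hr
    · intro x hx
      have := Finset.mem_Ioo.1 hx
      have := qt_le (n := n) (r := r)
      omega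
    · intro x hx y hxy
      obtain ⟨h1, h2⟩ := Finset.mem_Ioo.1 hx
      have := closureB hr hn h1 h2 hxy
      exact Finset.mem_Ioo.2 this
  rwa [Nat.card_Ioo] at h1

def rest (r : ℕ → ℕ → Prop) (off len : ℕ) : ℕ → ℕ → Prop :=
  fun u v => u < len ∧ v < len ∧ r (u + off) (v + off)

lemma rest_good (hr : GoodRel n r) (off len : ℕ) (hol : off + len ≤ n)
    (he : ∀ u, u < len → Even (((Finset.range len).filter (rest r off len u)).card)) :
    GoodRel len (rest r off len) where
  symm := fun ⟨hu, hv, h⟩ => ⟨hv, hu, hr.symm h⟩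
  trans := fun ⟨hu, hv, h⟩ ⟨_, hw, h'⟩ => ⟨hu, hw, hr.trans h h'⟩
  refl := fun u hu => ⟨hu, hu, hr.refl _ (by omega)⟩
  lt := fun ⟨hu, hv, _⟩ => ⟨hu, hv⟩
  nc := by
    rintro a b c d hab hbc hcd ⟨ha, hc, h1⟩ ⟨hb, hd, h2⟩
    exact ⟨ha, hb, hr.nc (by omega) (by omega) (by omega) h1 h2⟩
  even := he

lemma card_rest (hr : GoodRel n r) {off len u : ℕ} (hu : u < len)
    (hclo : ∀ y, r (u + off) y → off ≤ y ∧ y < off + len) :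
    ((Finset.range len).filter (rest r off len u)).card
      = ((Finset.range n).filter (r (u + off))).card := by
  apply Finset.card_nbij' (fun v => v + off) (fun y => y - off)
  · intro v hv
    obtain ⟨hv1, _, hv2, h⟩ := Finset.mem_filter.1 hv
    exact Finset.mem_filter.2 ⟨Finset.mem_range.2 (hr.lt h).2, h⟩
  · intro y hy
    obtain ⟨hy1, h⟩ := Finset.mem_filter.1 hy
    obtain ⟨h1, h2⟩ := hclo y h
    refine Finset.mem_filter.2 ⟨Finset.mem_range.2 (by beta_reduce; omega), hu, by beta_reduce; omega, ?_⟩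
    rwa [Nat.sub_add_cancel h1]
  · intro v hv; beta_reduce; omega
  · intro y hy
    obtain ⟨hy1, h⟩ := Finset.mem_filter.1 hy
    obtain ⟨h1, h2⟩ := hclo y h
    beta_reduce; omega

end Struct

section Glue

variable (na nb nc : ℕ)

def inS (rc : ℕ → ℕ → Prop) (x : ℕ) : Prop :=
  x = 0 ∨ x = 2*na+1 ∨ ∃ u, rc 0 u ∧ x = u + (2*na+2*nb+2)

def glue (ra rb rc : ℕ → ℕ → Prop) (x y : ℕ) : Prop :=
  (inS na nb rc x ∧ inS na nb rc y) ∨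
  (∃ u v, ra u v ∧ x = u+1 ∧ y = v+1) ∨
  (∃ u v, rb u v ∧ x = u+(2*na+2) ∧ y = v+(2*na+2)) ∨
  (∃ u v, rc u v ∧ ¬ rc 0 u ∧ x = u+(2*na+2*nb+2) ∧ y = v+(2*na+2*nb+2))

variable {na nb nc}
variable {ra rb rc : ℕ → ℕ → Prop}
variable (ha : GoodRel (2*na) ra) (hb : GoodRel (2*nb) rb) (hc : GoodRel (2*nc) rc)

lemma inS_bound (hc : GoodRel (2*nc) rc) {x : ℕ} (h : inS na nb rc x) :
    x = 0 ∨ x = 2*na+1 ∨ (2*na+2*nb+2 ≤ x ∧ x < 2*(na+nb+nc)+2) := by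
  rcases h with h | h | ⟨u, hu, rfl⟩
  · exact Or.inl h
  · exact Or.inr (Or.inl h)
  · have := (hc.lt hu).2
    exact Or.inr (Or.inr ⟨by omega, by omega⟩)

include ha hb hc in
lemma glue_S {x : ℕ} (hx : inS na nb rc x) {y : ℕ} :
    glue na nb ra rb rc x y ↔ inS na nb rc y := by
  constructor
  · rintro (⟨_, h⟩ | ⟨u, v, huv, rfl, rfl⟩ | ⟨u, v, huv, rfl, rfl⟩ | ⟨u, v, huv, h0, rfl, rfl⟩)
    · exact h
    · exfalso
      have hu := (ha.lt huv).1
      rcases hx with h | h | ⟨w, hw, h⟩ <;> omega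
    · exfalso
      have hu := (hb.lt huv).1
      rcases hx with h | h | ⟨w, hw, h⟩ <;> omega
    · exfalso
      rcases hx with h | h | ⟨w, hw, h⟩
      · omega
      · omega
      · have : w = u := by omega
        exact h0 (this ▸ hw)
  · intro hy
    exact Or.inl ⟨hx, hy⟩

include ha hb hc in
lemma glue_zero {y : ℕ} :
    glue na nb ra rb rc 0 y ↔ inS na nb rc y :=
  glue_S ha hb hc (Or.inl rfl)

include ha hb hc in
lemma glue_A {u : ℕ} (hu : u < 2*na) {y : ℕ} :
    glue na nb ra rb rc (u+1) y ↔ ∃ v, ra u v ∧ y = v+1 := by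
  constructor
  · rintro (⟨hx, _⟩ | ⟨u', v, huv, he, rfl⟩ | ⟨u', v, huv, he, rfl⟩ | ⟨u', v, huv, h0, he, rfl⟩)
    · exfalso
      rcases hx with h | h | ⟨w, hw, h⟩ <;> omega
    · have : u' = u := by omega
      exact ⟨v, this ▸ huv, rfl⟩
    · exfalso
      have := (hb.lt huv).1
      omega
    · exfalso
      have := (hc.lt huv).1
      omega
  · rintro ⟨v, hv, rfl⟩
    exact Or.inr (Or.inl ⟨u, v, hv, rfl, rfl⟩)

include ha hb hc in
lemma glue_B {u : ℕ} (hu : u < 2*nb) {y : ℕ} :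
    glue na nb ra rb rc (u+(2*na+2)) y ↔ ∃ v, rb u v ∧ y = v+(2*na+2) := by
  constructor
  · rintro (⟨hx, _⟩ | ⟨u', v, huv, he, rfl⟩ | ⟨u', v, huv, he, rfl⟩ | ⟨u', v, huv, h0, he, rfl⟩)
    · exfalso
      rcases hx with h | h | ⟨w, hw, h⟩ <;> omega
    · exfalso
      have := (ha.lt huv).1
      omega
    · have : u' = u := by omega
      exact ⟨v, this ▸ huv, rfl⟩
    · exfalso
      have := (hc.lt huv).1
      omega
  · rintro ⟨v, hv, rfl⟩
    exact Or.inr (Or.inr (Or.inl ⟨u, v, hv, rfl, rfl⟩))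

include ha hb hc in
lemma glue_C {u : ℕ} (hu : u < 2*nc) (h0 : ¬ rc 0 u) {y : ℕ} :
    glue na nb ra rb rc (u+(2*na+2*nb+2)) y ↔ ∃ v, rc u v ∧ y = v+(2*na+2*nb+2) := by
  constructor
  · rintro (⟨hx, _⟩ | ⟨u', v, huv, he, rfl⟩ | ⟨u', v, huv, he, rfl⟩ | ⟨u', v, huv, h0', he, rfl⟩)
    · exfalso
      rcases hx with h | h | ⟨w, hw, h⟩
      · omega
      · omega
      · have : w = u := by omega
        exact h0 (this ▸ hw)
    · exfalso
      have := (ha.lt huv).1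
      omega
    · exfalso
      have := (hb.lt huv).1
      omega
    · have : u' = u := by omega
      exact ⟨v, this ▸ huv, rfl⟩
  · rintro ⟨v, hv, rfl⟩
    exact Or.inr (Or.inr (Or.inr ⟨u, v, hv, h0, rfl, rfl⟩))

lemma inS_filter (hc : GoodRel (2*nc) rc) :
    (Finset.range (2*(na+nb+nc)+2)).filter (inS na nb rc) =
      insert 0 (insert (2*na+1)
        (((Finset.range (2*nc)).filter (rc 0)).image (· + (2*na+2*nb+2)))) := by
  ext y
  simp only [Finset.mem_filter, Finset.mem_range, Finset.mem_insert, Finset.mem_image]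
  constructor
  · rintro ⟨hy, h | h | ⟨u, hu, rfl⟩⟩
    · exact Or.inl h
    · exact Or.inr (Or.inl h)
    · exact Or.inr (Or.inr ⟨u, ⟨(hc.lt hu).2, hu⟩, rfl⟩)
  · rintro (rfl | rfl | ⟨u, ⟨hu1, hu2⟩, rfl⟩)
    · exact ⟨by omega, Or.inl rfl⟩
    · exact ⟨by omega, Or.inr (Or.inl rfl)⟩
    · exact ⟨by omega, Or.inr (Or.inr ⟨u, hu2, rfl⟩)⟩

lemma inS_card (hc : GoodRel (2*nc) rc) :
    ((Finset.range (2*(na+nb+nc)+2)).filter (inS na nb rc)).card =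
      2 + ((Finset.range (2*nc)).filter (rc 0)).card := by
  have h1 : (2*na+1) ∉ ((Finset.range (2*nc)).filter (rc 0)).image (· + (2*na+2*nb+2)) := by
    simp only [Finset.mem_image, Finset.mem_filter, Finset.mem_range, not_exists]
    rintro u ⟨⟨hu, _⟩, h⟩
    omega
  have h0 : (0 : ℕ) ∉ insert (2*na+1)
      (((Finset.range (2*nc)).filter (rc 0)).image (· + (2*na+2*nb+2))) := by
    simp only [Finset.mem_insert, Finset.mem_image, Finset.mem_filter, Finset.mem_range]
    rintro (h | ⟨u, ⟨hu, _⟩, h⟩) <;> omega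
  rw [inS_filter hc, Finset.card_insert_of_notMem h0, Finset.card_insert_of_notMem h1,
    Finset.card_image_of_injective _ (add_left_injective _)]
  omega

lemma inS_even (hc : GoodRel (2*nc) rc) :
    Even (((Finset.range (2*(na+nb+nc)+2)).filter (inS na nb rc)).card) := by
  rw [inS_card hc]
  rcases Nat.eq_zero_or_pos nc with h | h
  · subst h
    simp
  · obtain ⟨m, hm⟩ := hc.even 0 (by omega)
    exact ⟨1 + m, by omega⟩

include ha hb hc in
lemma glue_good : GoodRel (2*(na+nb+nc)+2) (glue na nb ra rb rc) where
  symm := by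
    rintro x y (⟨hx, hy⟩ | ⟨u, v, huv, rfl, rfl⟩ | ⟨u, v, huv, rfl, rfl⟩ |
      ⟨u, v, huv, h0, rfl, rfl⟩)
    · exact Or.inl ⟨hy, hx⟩
    · exact Or.inr (Or.inl ⟨v, u, ha.symm huv, rfl, rfl⟩)
    · exact Or.inr (Or.inr (Or.inl ⟨v, u, hb.symm huv, rfl, rfl⟩))
    · have h0v : ¬ rc 0 v := fun h => h0 (hc.trans h (hc.symm huv))
      exact Or.inr (Or.inr (Or.inr ⟨v, u, hc.symm huv, h0v, rfl, rfl⟩))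
  trans := by
    rintro x y z hxy hyz
    rcases hxy with ⟨hx, hy⟩ | ⟨u, v, huv, rfl, rfl⟩ | ⟨u, v, huv, rfl, rfl⟩ |
      ⟨u, v, huv, h0, rfl, rfl⟩
    · exact Or.inl ⟨hx, (glue_S ha hb hc hy).1 hyz⟩
    · obtain ⟨w, hvw, rfl⟩ := (glue_A ha hb hc (ha.lt huv).2).1 hyz
      exact Or.inr (Or.inl ⟨u, w, ha.trans huv hvw, rfl, rfl⟩)
    · obtain ⟨w, hvw, rfl⟩ := (glue_B ha hb hc (hb.lt huv).2).1 hyz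
      exact Or.inr (Or.inr (Or.inl ⟨u, w, hb.trans huv hvw, rfl, rfl⟩))
    · have h0v : ¬ rc 0 v := fun h => h0 (hc.trans h (hc.symm huv))
      obtain ⟨w, hvw, rfl⟩ := (glue_C ha hb hc (hc.lt huv).2 h0v).1 hyz
      exact Or.inr (Or.inr (Or.inr ⟨u, w, hc.trans huv hvw, h0, rfl, rfl⟩))
  refl := by
    intro x hx
    rcases Nat.lt_or_ge x 1 with h | h
    · interval_cases x
      exact Or.inl ⟨Or.inl rfl, Or.inl rfl⟩
    rcases Nat.lt_or_ge x (2*na+1) with h2 | h2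
    · exact Or.inr (Or.inl ⟨x-1, x-1, ha.refl (x-1) (by omega), by omega, by omega⟩)
    rcases Nat.eq_or_lt_of_le h2 with h3 | h3
    · exact Or.inl ⟨Or.inr (Or.inl h3.symm), Or.inr (Or.inl h3.symm)⟩
    rcases Nat.lt_or_ge x (2*na+2*nb+2) with h4 | h4
    · exact Or.inr (Or.inr (Or.inl ⟨x-(2*na+2), x-(2*na+2), hb.refl _ (by omega),
        by omega, by omega⟩))
    · by_cases h5 : rc 0 (x - (2*na+2*nb+2))
      · have : inS na nb rc x := Or.inr (Or.inr ⟨x-(2*na+2*nb+2), h5, by omega⟩)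
        exact Or.inl ⟨this, this⟩
      · exact Or.inr (Or.inr (Or.inr ⟨x-(2*na+2*nb+2), x-(2*na+2*nb+2),
          hc.refl _ (by omega), h5, by omega, by omega⟩))
  lt := by
    rintro x y (⟨hx, hy⟩ | ⟨u, v, huv, rfl, rfl⟩ | ⟨u, v, huv, rfl, rfl⟩ |
      ⟨u, v, huv, h0, rfl, rfl⟩)
    · rcases inS_bound hc hx with h | h | h <;> rcases inS_bound hc hy with h' | h' | h' <;> omega
    · have := ha.lt huv; omega
    · have := hb.lt huv; omega
    · have := hc.lt huv; omega
  nc := by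
    rintro a b c d hab hbc hcd hac hbd
    rcases hac with ⟨hxa, hxc⟩ | ⟨u, v, huv, rfl, rfl⟩ | ⟨u, v, huv, rfl, rfl⟩ |
      ⟨u, v, huv, h0, rfl, rfl⟩
    · -- a, c in the special class S
      by_cases hS : inS na nb rc b
      · exact Or.inl ⟨hxa, hS⟩
      exfalso
      rcases hbd with ⟨hxb, _⟩ | ⟨u', v', huv', rfl, rfl⟩ | ⟨u', v', huv', rfl, rfl⟩ |
        ⟨u', v', huv', h0', rfl, rfl⟩
      · exact hS hxb
      · -- b, d in A region; c between them must be in S : impossible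
        have hv' := (ha.lt huv').2
        rcases inS_bound hc hxc with h | h | h <;> omega
      · have hv' := (hb.lt huv').2
        rcases inS_bound hc hxc with h | h | h <;> omega
      · -- b, d in C region, not in class of 0
        have hu' := (hc.lt huv').1
        have hv'2 := (hc.lt huv').2
        -- c is in S and q ≤ b < c so c = w + q with rc 0 w
        rcases hxc with h | h | ⟨w, hw, rfl⟩
        · omega
        · omega
        · have hu'pos : 0 < u' := by
            rcases Nat.eq_zero_or_pos u' with h | h
            · exact absurd (h ▸ hc.refl 0 (by omega)) (h ▸ h0')
            · exact h
          have : rc 0 u' := hc.nc hu'pos (by omega) (by omega) hw huv'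
          exact h0' this
    · -- a, c in A region
      have hu := (ha.lt huv).1
      have hv := (ha.lt huv).2
      rcases hbd with ⟨hxb, _⟩ | ⟨u', v', huv', rfl, rfl⟩ | ⟨u', v', huv', rfl, rfl⟩ |
        ⟨u', v', huv', h0', rfl, rfl⟩
      · exfalso
        rcases inS_bound hc hxb with h | h | h <;> omega
      · have : ra u u' := ha.nc (by omega) (by omega) (by omega) huv huv'
        exact Or.inr (Or.inl ⟨u, u', this, rfl, rfl⟩)
      · exfalso; omega
      · exfalso; omega
    · -- a, c in B region
      have hu := (hb.lt huv).1
      have hv := (hb.lt huv).2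
      rcases hbd with ⟨hxb, _⟩ | ⟨u', v', huv', rfl, rfl⟩ | ⟨u', v', huv', rfl, rfl⟩ |
        ⟨u', v', huv', h0', rfl, rfl⟩
      · exfalso
        rcases inS_bound hc hxb with h | h | h <;> omega
      · exfalso
        have := (ha.lt huv').2
        omega
      · have : rb u u' := hb.nc (by omega) (by omega) (by omega) huv huv'
        exact Or.inr (Or.inr (Or.inl ⟨u, u', this, rfl, rfl⟩))
      · exfalso; omega
    · -- a, c in C region, not class of 0
      have hu := (hc.lt huv).1
      have hv := (hc.lt huv).2
      rcases hbd with ⟨hxb, hxd⟩ | ⟨u', v', huv', rfl, rfl⟩ | ⟨u', v', huv', rfl, rfl⟩ |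
        ⟨u', v', huv', h0', rfl, rfl⟩
      · exfalso
        -- b, d both in S, both > a ≥ q
        rcases inS_bound hc hxb with h | h | h
        · omega
        · omega
        rcases hxb with h' | h' | ⟨w, hw, rfl⟩
        · omega
        · omega
        rcases hxd with h' | h' | ⟨w', hw', rfl⟩
        · omega
        · omega
        have hww' : rc w w' := hc.trans (hc.symm hw) hw'
        have : rc u w := hc.nc (by omega) (by omega) (by omega) huv hww'
        exact h0 (hc.trans hw (hc.symm this))
      · exfalso
        have := (ha.lt huv').1
        omega
      · exfalso
        have := (hb.lt huv').1
        omega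
      · have : rc u u' := hc.nc (by omega) (by omega) (by omega) huv huv'
        exact Or.inr (Or.inr (Or.inr ⟨u, u', this, h0, rfl, rfl⟩))
  even := by
    intro x hx
    rcases Nat.lt_or_ge x 1 with h | h
    · -- x = 0 : class is S
      have hx0 : x = 0 := by omega
      subst hx0
      have : (Finset.range (2*(na+nb+nc)+2)).filter (glue na nb ra rb rc 0) =
          (Finset.range (2*(na+nb+nc)+2)).filter (inS na nb rc) := by
        apply Finset.filter_congr
        intro y _
        exact glue_zero ha hb hc
      rw [this]
      exact inS_even hc
    rcases Nat.lt_or_ge x (2*na+1) with h2 | h2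
    · -- A region
      have hu : x - 1 < 2*na := by omega
      have hxe : x = (x-1) + 1 := by omega
      have hcard : ((Finset.range (2*(na+nb+nc)+2)).filter (glue na nb ra rb rc x)).card
          = ((Finset.range (2*na)).filter (ra (x-1))).card := by
        apply Finset.card_nbij' (fun y => y - 1) (fun v => v + 1)
        · intro y hy
          obtain ⟨hy1, hy2⟩ := Finset.mem_filter.1 hy
          rw [hxe] at hy2
          obtain ⟨v, hv, rfl⟩ := (glue_A ha hb hc hu).1 hy2
          simpa using Finset.mem_filter.2 ⟨Finset.mem_range.2 (ha.lt hv).2, hv⟩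
        · intro v hv
          obtain ⟨hv1, hv2⟩ := Finset.mem_filter.1 hv
          refine Finset.mem_filter.2 ⟨Finset.mem_range.2 (by
            have := Finset.mem_range.1 hv1; beta_reduce; omega), ?_⟩
          rw [hxe]
          exact (glue_A ha hb hc hu).2 ⟨v, hv2, rfl⟩
        · intro y hy
          obtain ⟨hy1, hy2⟩ := Finset.mem_filter.1 hy
          rw [hxe] at hy2
          obtain ⟨v, hv, rfl⟩ := (glue_A ha hb hc hu).1 hy2
          beta_reduce; omega
        · intro v hv; beta_reduce; omega
      rw [hcard]
      exact ha.even _ hu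
    rcases Nat.eq_or_lt_of_le h2 with h3 | h3
    · -- x = 2*na+1 : class is S
      have : (Finset.range (2*(na+nb+nc)+2)).filter (glue na nb ra rb rc x) =
          (Finset.range (2*(na+nb+nc)+2)).filter (inS na nb rc) := by
        apply Finset.filter_congr
        intro y _
        exact glue_S ha hb hc (Or.inr (Or.inl h3.symm))
      rw [this]
      exact inS_even hc
    rcases Nat.lt_or_ge x (2*na+2*nb+2) with h4 | h4
    · -- B region
      have hu : x - (2*na+2) < 2*nb := by omega
      have hxe : x = (x-(2*na+2)) + (2*na+2) := by omega
      have hcard : ((Finset.range (2*(na+nb+nc)+2)).filter (glue na nb ra rb rc x)).card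
          = ((Finset.range (2*nb)).filter (rb (x-(2*na+2)))).card := by
        apply Finset.card_nbij' (fun y => y - (2*na+2)) (fun v => v + (2*na+2))
        · intro y hy
          obtain ⟨hy1, hy2⟩ := Finset.mem_filter.1 hy
          rw [hxe] at hy2
          obtain ⟨v, hv, rfl⟩ := (glue_B ha hb hc hu).1 hy2
          simpa using Finset.mem_filter.2 ⟨Finset.mem_range.2 (hb.lt hv).2, hv⟩
        · intro v hv
          obtain ⟨hv1, hv2⟩ := Finset.mem_filter.1 hv
          refine Finset.mem_filter.2 ⟨Finset.mem_range.2 (by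
            have := Finset.mem_range.1 hv1; beta_reduce; omega), ?_⟩
          rw [hxe]
          exact (glue_B ha hb hc hu).2 ⟨v, hv2, rfl⟩
        · intro y hy
          obtain ⟨hy1, hy2⟩ := Finset.mem_filter.1 hy
          rw [hxe] at hy2
          obtain ⟨v, hv, rfl⟩ := (glue_B ha hb hc hu).1 hy2
          beta_reduce; omega
        · intro v hv; beta_reduce; omega
      rw [hcard]
      exact hb.even _ hu
    · -- C region
      have hu : x - (2*na+2*nb+2) < 2*nc := by omega
      have hxe : x = (x-(2*na+2*nb+2)) + (2*na+2*nb+2) := by omega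
      by_cases h5 : rc 0 (x - (2*na+2*nb+2))
      · -- class is S
        have hxS : inS na nb rc x := Or.inr (Or.inr ⟨x-(2*na+2*nb+2), h5, by omega⟩)
        have : (Finset.range (2*(na+nb+nc)+2)).filter (glue na nb ra rb rc x) =
            (Finset.range (2*(na+nb+nc)+2)).filter (inS na nb rc) := by
          apply Finset.filter_congr
          intro y _
          exact glue_S ha hb hc hxS
        rw [this]
        exact inS_even hc
      · have hcard : ((Finset.range (2*(na+nb+nc)+2)).filter (glue na nb ra rb rc x)).card
            = ((Finset.range (2*nc)).filter (rc (x-(2*na+2*nb+2)))).card := by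
          apply Finset.card_nbij' (fun y => y - (2*na+2*nb+2)) (fun v => v + (2*na+2*nb+2))
          · intro y hy
            obtain ⟨hy1, hy2⟩ := Finset.mem_filter.1 hy
            rw [hxe] at hy2
            obtain ⟨v, hv, rfl⟩ := (glue_C ha hb hc hu h5).1 hy2
            simpa using Finset.mem_filter.2 ⟨Finset.mem_range.2 (hc.lt hv).2, hv⟩
          · intro v hv
            obtain ⟨hv1, hv2⟩ := Finset.mem_filter.1 hv
            refine Finset.mem_filter.2 ⟨Finset.mem_range.2 (by
              have := Finset.mem_range.1 hv1; beta_reduce; omega), ?_⟩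
            rw [hxe]
            exact (glue_C ha hb hc hu h5).2 ⟨v, hv2, rfl⟩
          · intro y hy
            obtain ⟨hy1, hy2⟩ := Finset.mem_filter.1 hy
            rw [hxe] at hy2
            obtain ⟨v, hv, rfl⟩ := (glue_C ha hb hc hu h5).1 hy2
            beta_reduce; omega
          · intro v hv; beta_reduce; omega
        rw [hcard]
        exact hc.even _ hu

end Glue

section Main

variable {na nb nc : ℕ}
variable {ra rb rc : ℕ → ℕ → Prop}
variable (ha : GoodRel (2*na) ra) (hb : GoodRel (2*nb) rb) (hc : GoodRel (2*nc) rc)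

include ha hb hc in
lemma pt_glue : pt (glue na nb ra rb rc) = 2*na+1 := by
  have hg : glue na nb ra rb rc 0 (2*na+1) := (glue_zero ha hb hc).2 (Or.inr (Or.inl rfl))
  have hmem : (2*na+1) ∈ {y | 0 < y ∧ glue na nb ra rb rc 0 y} := ⟨by omega, hg⟩
  have hdef : pt (glue na nb ra rb rc) = sInf {y | 0 < y ∧ glue na nb ra rb rc 0 y} := rfl
  rw [hdef]
  refine le_antisymm (Nat.sInf_le hmem) ?_
  obtain ⟨hpos, hrel⟩ := Nat.sInf_mem (⟨_, hmem⟩ :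
    {y | 0 < y ∧ glue na nb ra rb rc 0 y}.Nonempty)
  rcases inS_bound hc ((glue_zero ha hb hc).1 hrel) with h | h | h <;> omega

include ha hb hc in
lemma qt_glue : qt (2*(na+nb+nc)+2) (glue na nb ra rb rc) = 2*na+2*nb+2 := by
  have hdef : qt (2*(na+nb+nc)+2) (glue na nb ra rb rc) =
      sInf ({y | pt (glue na nb ra rb rc) < y ∧ glue na nb ra rb rc 0 y} ∪
        {2*(na+nb+nc)+2}) := rfl
  rw [hdef, pt_glue ha hb hc]
  have hmem : (2*na+2*nb+2) ∈ ({y | 2*na+1 < y ∧ glue na nb ra rb rc 0 y} ∪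
      {2*(na+nb+nc)+2} : Set ℕ) := by
    rcases Nat.eq_zero_or_pos nc with h | h
    · right
      simp only [Set.mem_singleton_iff]
      omega
    · left
      refine ⟨by omega, (glue_zero ha hb hc).2 (Or.inr (Or.inr ⟨0, hc.refl 0 (by omega), by omega⟩))⟩
  have hlb : ∀ y ∈ ({y | 2*na+1 < y ∧ glue na nb ra rb rc 0 y} ∪
      {2*(na+nb+nc)+2} : Set ℕ), 2*na+2*nb+2 ≤ y := by
    rintro y (⟨hy1, hy2⟩ | hy)
    · rcases inS_bound hc ((glue_zero ha hb hc).1 hy2) with h | h | h <;> omega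
    · simp only [Set.mem_singleton_iff] at hy
      omega
  refine le_antisymm (Nat.sInf_le hmem) (hlb _ (Nat.sInf_mem ⟨_, hmem⟩))

variable {n : ℕ} {r : ℕ → ℕ → Prop} (hr : GoodRel n r)
  (hn : n = 2*(na+nb+nc)+2) (hp : pt r = 2*na+1) (hq : qt n r = 2*na+2*nb+2)

include hr hn hp in
lemma restA_good : GoodRel (2*na) (rest r 1 (2*na)) := by
  have hn0 : 0 < n := by omega
  have hpn := pt_lt hr hn0
  apply rest_good hr 1 (2*na) (by omega)
  intro u hu
  rw [card_rest hr hu ?_]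
  · exact hr.even (u+1) (by omega)
  · intro y hy
    have := closureA hr hn0 (by omega) (by rw [hp]; omega) hy
    omega

include hr hn hp hq in
lemma restB_good : GoodRel (2*nb) (rest r (2*na+2) (2*nb)) := by
  have hn0 : 0 < n := by omega
  have hqn : qt n r ≤ n := qt_le
  apply rest_good hr (2*na+2) (2*nb) (by omega)
  intro u hu
  rw [card_rest hr hu ?_]
  · exact hr.even (u+(2*na+2)) (by omega)
  · intro y hy
    have := closureB hr hn0 (by rw [hp]; omega) (by rw [hq]; omega) hy
    omega

include hr in
lemma class0_filter (hn0 : 0 < n) :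
    (Finset.range n).filter (r 0) = insert 0 (insert (pt r)
      (((Finset.range (n - qt n r)).filter (fun v => r 0 (v + qt n r))).image
        (· + qt n r))) := by
  ext y
  simp only [Finset.mem_filter, Finset.mem_range, Finset.mem_insert, Finset.mem_image]
  constructor
  · rintro ⟨hy, h⟩
    rcases mem_class0 hr h with h1 | h1 | h1
    · exact Or.inl h1
    · exact Or.inr (Or.inl h1)
    · refine Or.inr (Or.inr ⟨y - qt n r, ⟨by omega, ?_⟩, by omega⟩)
      rwa [Nat.sub_add_cancel h1]
  · rintro (rfl | rfl | ⟨v, ⟨hv1, hv2⟩, rfl⟩)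
    · exact ⟨hn0, hr.refl 0 hn0⟩
    · exact ⟨pt_lt hr hn0, (pt_spec hr hn0).2⟩
    · exact ⟨by omega, hv2⟩

include hr in
lemma class0_card (hn0 : 0 < n) :
    ((Finset.range n).filter (r 0)).card =
      2 + ((Finset.range (n - qt n r)).filter (fun v => r 0 (v + qt n r))).card := by
  have hgt := qt_gt hr hn0
  have hpt := (pt_spec hr hn0).1
  have h1 : pt r ∉ ((Finset.range (n - qt n r)).filter
      (fun v => r 0 (v + qt n r))).image (· + qt n r) := by
    simp only [Finset.mem_image, Finset.mem_filter, Finset.mem_range, not_exists]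
    rintro v ⟨⟨hv, _⟩, h⟩
    omega
  have h0 : (0 : ℕ) ∉ insert (pt r) (((Finset.range (n - qt n r)).filter
      (fun v => r 0 (v + qt n r))).image (· + qt n r)) := by
    simp only [Finset.mem_insert, Finset.mem_image, Finset.mem_filter, Finset.mem_range]
    rintro (h | ⟨v, ⟨hv, _⟩, h⟩) <;> omega
  rw [class0_filter hr hn0, Finset.card_insert_of_notMem h0,
    Finset.card_insert_of_notMem h1,
    Finset.card_image_of_injective _ (add_left_injective _)]
  omega

include hr hn hp hq in
lemma restC_good : GoodRel (2*nc) (rest r (2*na+2*nb+2) (2*nc)) := by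
  have hn0 : 0 < n := by omega
  have hqn : qt n r ≤ n := qt_le
  apply rest_good hr (2*na+2*nb+2) (2*nc) (by omega)
  intro u hu
  by_cases h0 : r 0 (u + (2*na+2*nb+2))
  · have hfe : (Finset.range (2*nc)).filter (rest r (2*na+2*nb+2) (2*nc) u) =
        (Finset.range (2*nc)).filter (fun v => r 0 (v + (2*na+2*nb+2))) := by
      apply Finset.filter_congr
      intro v hv
      have hv' := Finset.mem_range.1 hv
      constructor
      · rintro ⟨_, _, h⟩
        exact hr.trans h0 h
      · intro h
        exact ⟨hu, hv', hr.trans (hr.symm h0) h⟩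
    rw [hfe]
    have hcc := class0_card hr hn0
    have h2 : n - qt n r = 2*nc := by omega
    rw [h2, hq] at hcc
    obtain ⟨m, hm⟩ := hr.even 0 hn0
    rw [hcc] at hm
    exact ⟨m - 1, by omega⟩
  · rw [card_rest hr hu ?_]
    · exact hr.even (u+(2*na+2*nb+2)) (by omega)
    · intro y hy
      have h1 := closureC hr hn0 (by rw [hq]; omega) h0 hy
      have h2 := (hr.lt hy).2
      omega

-- round trip 1: disassembling a glued relation
include ha hb hc in
lemma rest_glue_A : rest (glue na nb ra rb rc) 1 (2*na) = ra := by
  funext u v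
  apply propext
  constructor
  · rintro ⟨hu, hv, h⟩
    obtain ⟨v', hv', he⟩ := (glue_A ha hb hc hu).1 h
    have : v' = v := by omega
    exact this ▸ hv'
  · intro h
    exact ⟨(ha.lt h).1, (ha.lt h).2, Or.inr (Or.inl ⟨u, v, h, rfl, rfl⟩)⟩

include ha hb hc in
lemma rest_glue_B : rest (glue na nb ra rb rc) (2*na+2) (2*nb) = rb := by
  funext u v
  apply propext
  constructor
  · rintro ⟨hu, hv, h⟩
    obtain ⟨v', hv', he⟩ := (glue_B ha hb hc hu).1 h
    have : v' = v := by omega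
    exact this ▸ hv'
  · intro h
    exact ⟨(hb.lt h).1, (hb.lt h).2, Or.inr (Or.inr (Or.inl ⟨u, v, h, rfl, rfl⟩))⟩

include ha hb hc in
lemma rest_glue_C : rest (glue na nb ra rb rc) (2*na+2*nb+2) (2*nc) = rc := by
  funext u v
  apply propext
  constructor
  · rintro ⟨hu, hv, h⟩
    by_cases h0 : rc 0 u
    · have hS : inS na nb rc (u + (2*na+2*nb+2)) := Or.inr (Or.inr ⟨u, h0, rfl⟩)
      have hy := (glue_S ha hb hc hS).1 h
      rcases hy with h1 | h1 | ⟨w, hw, h1⟩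
      · omega
      · omega
      · have : w = v := by omega
        exact hc.trans (hc.symm h0) (this ▸ hw)
    · obtain ⟨v', hv', he⟩ := (glue_C ha hb hc hu h0).1 h
      have : v' = v := by omega
      exact this ▸ hv'
  · intro h
    have hu := (hc.lt h).1
    have hv := (hc.lt h).2
    by_cases h0 : rc 0 u
    · exact ⟨hu, hv, Or.inl ⟨Or.inr (Or.inr ⟨u, h0, rfl⟩),
        Or.inr (Or.inr ⟨v, hc.trans h0 h, rfl⟩)⟩⟩
    · exact ⟨hu, hv, Or.inr (Or.inr (Or.inr ⟨u, v, h, h0, rfl, rfl⟩))⟩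

-- round trip 2: gluing the pieces of a relation
include hr hn hp hq in
lemma glue_rest :
    glue na nb (rest r 1 (2*na)) (rest r (2*na+2) (2*nb)) (rest r (2*na+2*nb+2) (2*nc)) = r := by
  have hn0 : 0 < n := by omega
  have hqn : qt n r ≤ n := qt_le
  have hptn := pt_lt hr hn0
  have hinS : ∀ x, inS na nb (rest r (2*na+2*nb+2) (2*nc)) x → r 0 x := by
    rintro x (rfl | rfl | ⟨u, hu, rfl⟩)
    · exact hr.refl 0 hn0
    · exact hp ▸ (pt_spec hr hn0).2
    · obtain ⟨hpos, hu2, hrel⟩ := hu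
      rw [Nat.zero_add] at hrel
      have hqlt : qt n r < n := by omega
      have h0q : r 0 (qt n r) := (qt_spec hr hqlt).2
      rw [hq] at h0q
      exact hr.trans h0q hrel
  have htoS : ∀ x, x < n → r 0 x → inS na nb (rest r (2*na+2*nb+2) (2*nc)) x := by
    intro x hx h0
    rcases mem_class0 hr h0 with h1 | h1 | h1
    · exact Or.inl h1
    · exact Or.inr (Or.inl (by rw [h1, hp]))
    · have hqlt : qt n r < n := by omega
      have h0q : r 0 (qt n r) := (qt_spec hr hqlt).2
      refine Or.inr (Or.inr ⟨x - (2*na+2*nb+2), ⟨by omega, by omega, ?_⟩, by omega⟩)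
      have : 0 + (2*na+2*nb+2) = qt n r := by omega
      rw [this, Nat.sub_add_cancel (by omega : 2*na+2*nb+2 ≤ x)]
      exact hr.trans (hr.symm h0q) h0
  funext x y
  apply propext
  constructor
  · rintro (⟨hx, hy⟩ | ⟨u, v, ⟨_, _, h⟩, rfl, rfl⟩ | ⟨u, v, ⟨_, _, h⟩, rfl, rfl⟩ |
      ⟨u, v, ⟨_, _, h⟩, _, rfl, rfl⟩)
    · exact hr.trans (hr.symm (hinS x hx)) (hinS y hy)
    · exact h
    · exact h
    · exact h
  · intro h
    have hx := (hr.lt h).1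
    have hy := (hr.lt h).2
    by_cases h0 : r 0 x
    · exact Or.inl ⟨htoS x hx h0, htoS y hy (hr.trans h0 h)⟩
    · have hx0 : x ≠ 0 := fun he => h0 (he ▸ hr.refl 0 hn0)
      have hxp : x ≠ pt r := fun he => h0 (he ▸ (pt_spec hr hn0).2)
      rcases Nat.lt_or_ge x (pt r) with h1 | h1
      · have hcl := closureA hr hn0 (by omega) h1 h
        refine Or.inr (Or.inl ⟨x - 1, y - 1, ⟨by omega, by omega, ?_⟩, by omega, by omega⟩)
        rw [Nat.sub_add_cancel (by omega), Nat.sub_add_cancel (by omega)]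
        exact h
      · rcases Nat.lt_or_ge x (qt n r) with h2 | h2
        · have h1' : pt r < x := by omega
          have hcl := closureB hr hn0 h1' h2 h
          refine Or.inr (Or.inr (Or.inl ⟨x - (2*na+2), y - (2*na+2),
            ⟨by omega, by omega, ?_⟩, by omega, by omega⟩))
          rw [Nat.sub_add_cancel (by omega), Nat.sub_add_cancel (by omega)]
          exact h
        · have hcl := closureC hr hn0 h2 h0 h
          have hnc0 : ¬ (rest r (2*na+2*nb+2) (2*nc)) 0 (x - (2*na+2*nb+2)) := by
            rintro ⟨hpos, _, hrel⟩
            have hqlt : qt n r < n := by omega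
            have h0q : r 0 (qt n r) := (qt_spec hr hqlt).2
            have : 0 + (2*na+2*nb+2) = qt n r := by omega
            rw [this, Nat.sub_add_cancel (by omega : 2*na+2*nb+2 ≤ x)] at hrel
            exact h0 (hr.trans h0q hrel)
          refine Or.inr (Or.inr (Or.inr ⟨x - (2*na+2*nb+2), y - (2*na+2*nb+2),
            ⟨by omega, by omega, ?_⟩, hnc0, by omega, by omega⟩))
          rw [Nat.sub_add_cancel (by omega), Nat.sub_add_cancel (by omega)]
          exact h

end Main

section Count

noncomputable def bigEquiv (na nb nc n : ℕ) (hn : n = 2*(na+nb+nc)+2) :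
    {R : NCSet n // pt R.1 = 2*na+1 ∧ qt n R.1 = 2*na+2*nb+2} ≃
      (NCSet (2*na) × NCSet (2*nb) × NCSet (2*nc)) where
  toFun R := (⟨rest R.1.1 1 (2*na), restA_good R.1.2 hn R.2.1⟩,
              ⟨rest R.1.1 (2*na+2) (2*nb), restB_good R.1.2 hn R.2.1 R.2.2⟩,
              ⟨rest R.1.1 (2*na+2*nb+2) (2*nc), restC_good R.1.2 hn R.2.1 R.2.2⟩)
  invFun x := ⟨⟨glue na nb x.1.1 x.2.1.1 x.2.2.1,
      hn ▸ glue_good x.1.2 x.2.1.2 x.2.2.2⟩,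
    pt_glue x.1.2 x.2.1.2 x.2.2.2,
    by subst hn; exact qt_glue x.1.2 x.2.1.2 x.2.2.2⟩
  left_inv R := Subtype.ext (Subtype.ext (glue_rest R.1.2 hn R.2.1 R.2.2))
  right_inv x := by
    obtain ⟨⟨r1, h1⟩, ⟨r2, h2⟩, ⟨r3, h3⟩⟩ := x
    refine Prod.ext (Subtype.ext ?_) (Prod.ext (Subtype.ext ?_) (Subtype.ext ?_))
    · exact rest_glue_A h1 h2 h3
    · exact rest_glue_B h1 h2 h3
    · exact rest_glue_C h1 h2 h3

lemma card_fiber (k i l : ℕ) (hil : i + l ≤ k) :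
    Nat.card {R : NCSet (2*(k+1)) // pt R.1 = 2*i+1 ∧ qt (2*(k+1)) R.1 = 2*i+2*l+2} =
      Nat.card (NCSet (2*i)) * (Nat.card (NCSet (2*l)) * Nat.card (NCSet (2*(k-i-l)))) := by
  rw [Nat.card_congr (bigEquiv i l (k-i-l) (2*(k+1)) (by omega))]
  rw [Nat.card_prod, Nat.card_prod]

lemma main_rec (k : ℕ) :
    Nat.card (NCSet (2*(k+1))) = ∑ i ∈ Finset.range (k+1), ∑ l ∈ Finset.range (k-i+1),
      Nat.card (NCSet (2*i)) * (Nat.card (NCSet (2*l)) * Nat.card (NCSet (2*(k-i-l)))) := by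
  classical
  letI : Fintype (NCSet (2*(k+1))) := Fintype.ofFinite _
  have hn0 : 0 < 2*(k+1) := by omega
  rw [Nat.card_eq_fintype_card, ← Finset.card_univ]
  have hmaps : ∀ R : NCSet (2*(k+1)), R ∈ Finset.univ →
      (⟨(pt R.1 - 1)/2, (qt (2*(k+1)) R.1 - pt R.1 - 1)/2⟩ : Σ _ : ℕ, ℕ) ∈
        (Finset.range (k+1)).sigma (fun i => Finset.range (k-i+1)) := by
    intro R _
    obtain ⟨a0, ha0⟩ := even_ptm R.2 hn0
    obtain ⟨b0, hb0⟩ := even_qtm R.2 hn0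
    have h1 : 0 < pt R.1 := (pt_spec R.2 hn0).1
    have h2 := pt_lt R.2 hn0
    have h3 := qt_gt R.2 hn0
    have h4 : qt (2*(k+1)) R.1 ≤ 2*(k+1) := qt_le
    exact Finset.mem_sigma.2
      ⟨Finset.mem_range.2 (show (pt R.1 - 1)/2 < k+1 by omega),
       Finset.mem_range.2
         (show (qt (2*(k+1)) R.1 - pt R.1 - 1)/2 < k - (pt R.1 - 1)/2 + 1 by omega)⟩
  rw [Finset.card_eq_sum_card_fiberwise hmaps, Finset.sum_sigma]
  refine Finset.sum_congr rfl (fun i hi => Finset.sum_congr rfl (fun l hl => ?_))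
  have hi' := Finset.mem_range.1 hi
  have hl' := Finset.mem_range.1 hl
  have : (Finset.univ.filter (fun R : NCSet (2*(k+1)) =>
      (⟨(pt R.1 - 1)/2, (qt (2*(k+1)) R.1 - pt R.1 - 1)/2⟩ : Σ _ : ℕ, ℕ) = ⟨i, l⟩)).card
      = Nat.card {R : NCSet (2*(k+1)) //
          pt R.1 = 2*i+1 ∧ qt (2*(k+1)) R.1 = 2*i+2*l+2} := by
    rw [← Fintype.card_subtype, ← Nat.card_eq_fintype_card]
    apply Nat.card_congr
    apply Equiv.subtypeEquivRight
    intro R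
    obtain ⟨a0, ha0⟩ := even_ptm R.2 hn0
    obtain ⟨b0, hb0⟩ := even_qtm R.2 hn0
    have h1 : 0 < pt R.1 := (pt_spec R.2 hn0).1
    have h3 := qt_gt R.2 hn0
    simp only [Sigma.mk.inj_iff, heq_eq_eq]
    omega
  rw [this, card_fiber k i l (by omega)]

lemma NCSet_zero : Nat.card (NCSet 0) = 1 := by
  have hgood : GoodRel 0 (fun _ _ => False) :=
    ⟨fun h => h.elim, fun h _ => h.elim, fun x hx => absurd hx (by omega),
     fun h => h.elim, fun _ _ _ h _ => h.elim, fun x hx => absurd hx (by omega)⟩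
  rw [Nat.card_eq_one_iff_unique]
  refine ⟨⟨?_⟩, ⟨⟨fun _ _ => False, hgood⟩⟩⟩
  rintro ⟨rx, hx⟩ ⟨ry, hy⟩
  apply Subtype.ext
  funext u v
  apply propext
  constructor
  · intro h
    exact absurd (hx.lt h).1 (by omega)
  · intro h
    exact absurd (hy.lt h).1 (by omega)

lemma Fnum_zero : Fnum 0 = 1 := by
  rw [Fnum_eq]
  norm_num
  exact NCSet_zero

lemma Fnum_rec (k : ℕ) :
    Fnum (k+1) = ∑ i ∈ Finset.range (k+1), ∑ l ∈ Finset.range (k-i+1),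
      Fnum i * (Fnum l * Fnum (k-i-l)) := by
  simp only [Fnum_eq]
  exact main_rec k

end Count

/-- The generating function `g(z) = Σ_k |NC_h(2k)| z^k` satisfies `g − 1 = z g³`. -/
theorem generating_cubic :
    (PowerSeries.mk fun k => (Fnum k : ℚ)) - 1
      = PowerSeries.X * (PowerSeries.mk fun k => (Fnum k : ℚ)) ^ 3 := by
  ext n
  rw [map_sub]
  rcases n with _ | k
  · simp [PowerSeries.coeff_zero_eq_constantCoeff, map_mul, Fnum_zero]
  · rw [PowerSeries.coeff_succ_X_mul, PowerSeries.coeff_one, if_neg (Nat.succ_ne_zero k),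
      sub_zero]
    have h3 : (PowerSeries.mk fun j => (Fnum j : ℚ)) ^ 3
        = (PowerSeries.mk fun j => (Fnum j : ℚ)) *
          ((PowerSeries.mk fun j => (Fnum j : ℚ)) * (PowerSeries.mk fun j => (Fnum j : ℚ))) := by
      ring
    rw [h3, PowerSeries.coeff_mul, Finset.Nat.sum_antidiagonal_eq_sum_range_succ_mk]
    have hin : ∀ i ∈ Finset.range (k+1),
        (PowerSeries.coeff i) (PowerSeries.mk fun j => (Fnum j : ℚ)) *
          (PowerSeries.coeff (k - i)) ((PowerSeries.mk fun j => (Fnum j : ℚ)) *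
            (PowerSeries.mk fun j => (Fnum j : ℚ)))
        = (Fnum i : ℚ) * ∑ l ∈ Finset.range (k - i + 1),
            (Fnum l : ℚ) * (Fnum (k - i - l) : ℚ) := by
      intro i hi
      rw [PowerSeries.coeff_mul, Finset.Nat.sum_antidiagonal_eq_sum_range_succ_mk]
      simp [PowerSeries.coeff_mk, Finset.mul_sum]
    rw [Finset.sum_congr rfl hin, PowerSeries.coeff_mk, Fnum_rec k]
    push_cast
    simp [Finset.mul_sum]
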